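/- Relative-distinctness of block-maximum output functions in d dimensions: let d ≥ 1, n ≥ 1, and let I : (Fin d → ℤ) → ℝ be injective and satisfy I(x) < I(y) whenever ∑_k x_k < ∑_k y_k. Define u_x(I) = max { I(⌊x/n⌋·n + Δ) | Δ ∈ {0, …, n − 1}^d } for x : Fin d → ℤ, where ⌊x/n⌋·n is taken componentwise. Then for every x : Fin d → ℤ and all Δ₁, Δ₂ ∈ {0, …, n − 1}^d with Δ₁ ≠ Δ₂, u_{x − Δ₁}(T_{−Δ₁}(I)) ≠ u_{x − Δ₂}(T_{−Δ₂}(I)). In particular, there are n^d pairwise relative-distinct output functions. -/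
import Mathlib


/-- The shift operator on `d`-dimensional images: `T t I x = I (x - t)`. -/
noncomputable def T {d : ℕ} (t : Fin d → ℤ) (I : (Fin d → ℤ) → ℝ) :
    (Fin d → ℤ) → ℝ := fun x => I (x - t)

/-- The block-maximum output function with block edge length `n` in `d`
dimensions: `u x (I) = max { I (⌊x/n⌋·n + Δ) | Δ ∈ {0, …, n − 1}^d }`,
with floor division applied componentwise. -/
noncomputable def u (d n : ℕ) (hn : 1 ≤ n) (I : (Fin d → ℤ) → ℝ)
    (x : Fin d → ℤ) : ℝ :=
  (Finset.univ : Finset (Fin d → Fin n)).sup'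
    (Finset.univ_nonempty_iff.mpr ⟨fun _ => ⟨0, hn⟩⟩)
    (fun Δ => I (fun k => (x k / (n : ℤ)) * (n : ℤ) + (Δ k : ℤ)))

lemma u_shift_eq (d n : ℕ) (hn : 1 ≤ n) (I : (Fin d → ℤ) → ℝ)
    (hI : ∀ x y : Fin d → ℤ, (∑ k, x k) < (∑ k, y k) → I x < I y)
    (Δ y : Fin d → ℤ) :
    u d n hn (T (-Δ) I) y
      = I (fun k => (y k / (n : ℤ)) * (n : ℤ) + ((n : ℤ) - 1) + Δ k) := by
  have htop : ((fun _ => (⟨n - 1, by omega⟩ : Fin n)) : Fin d → Fin n) ∈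
      (Finset.univ : Finset (Fin d → Fin n)) := Finset.mem_univ _
  apply le_antisymm
  · apply Finset.sup'_le
    intro Δ' _
    have harg : (fun k => (y k / (n : ℤ)) * (n : ℤ) + (Δ' k : ℤ)) - (-Δ)
        = fun k => (y k / (n : ℤ)) * (n : ℤ) + (Δ' k : ℤ) + Δ k := by
      funext k; simp [sub_neg_eq_add]
    show T (-Δ) I _ ≤ _
    rw [T, harg]
    by_cases hc : Δ' = (fun _ => (⟨n - 1, by omega⟩ : Fin n))
    · subst hc
      have : (fun k => (y k / (n : ℤ)) * (n : ℤ) + (((⟨n - 1, by omega⟩ : Fin n)) : ℤ) + Δ k)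
          = fun k => (y k / (n : ℤ)) * (n : ℤ) + ((n : ℤ) - 1) + Δ k := by
        funext k
        have : ((n : ℤ) - 1) = ((n - 1 : ℕ) : ℤ) := by omega
        simp [this]
      rw [this]
    · apply le_of_lt
      apply hI
      apply Finset.sum_lt_sum
      · intro k _
        have : (Δ' k : ℤ) ≤ (n : ℤ) - 1 := by
          have := (Δ' k).isLt; omega
        linarith
      · have : ∃ k, Δ' k ≠ (⟨n - 1, by omega⟩ : Fin n) := by
          by_contra h
          push_neg at h
          exact hc (funext h)
        obtain ⟨k, hk⟩ := this
        refine ⟨k, Finset.mem_univ _, ?_⟩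
        have h1 : (Δ' k : ℕ) < n - 1 := by
          have := (Δ' k).isLt
          have : (Δ' k : ℕ) ≠ n - 1 := fun h => hk (Fin.ext h)
          omega
        have : (Δ' k : ℤ) < (n : ℤ) - 1 := by exact_mod_cast (by omega : (Δ' k : ℕ) < n - 1)
        linarith
  · have := Finset.le_sup' (fun Δ' : Fin d → Fin n =>
      T (-Δ) I (fun k => (y k / (n : ℤ)) * (n : ℤ) + (Δ' k : ℤ))) htop
    refine le_trans (le_of_eq ?_) this
    rw [T]
    congr 1
    funext k
    have : ((n : ℤ) - 1) = ((n - 1 : ℕ) : ℤ) := by omega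
    simp [sub_neg_eq_add, this]

/-- Relative-distinctness of block-maximum output functions in `d` dimensions:
for an injective, coordinate-sum-monotone image `I` and distinct offsets
`Δ₁, Δ₂ ∈ {0, …, n − 1}^d`,
`u_{x − Δ₁}(T_{−Δ₁}(I)) ≠ u_{x − Δ₂}(T_{−Δ₂}(I))`. -/
theorem stmt_12 (d n : ℕ) (hd : 1 ≤ d) (hn : 1 ≤ n)
    (I : (Fin d → ℤ) → ℝ) (hinj : Function.Injective I)
    (hI : ∀ x y : Fin d → ℤ, (∑ k, x k) < (∑ k, y k) → I x < I y)
    (x : Fin d → ℤ) (Δ₁ Δ₂ : Fin d → ℤ)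
    (h1 : ∀ k, 0 ≤ Δ₁ k ∧ Δ₁ k < (n : ℤ))
    (h2 : ∀ k, 0 ≤ Δ₂ k ∧ Δ₂ k < (n : ℤ))
    (hne : Δ₁ ≠ Δ₂) :
    u d n hn (T (-Δ₁) I) (x - Δ₁) ≠ u d n hn (T (-Δ₂) I) (x - Δ₂) := by
  rw [u_shift_eq d n hn I hI Δ₁ (x - Δ₁), u_shift_eq d n hn I hI Δ₂ (x - Δ₂)]
  intro h
  apply hne
  have heq := hinj h
  funext k
  have hk := congrFun heq k
  simp only [Pi.sub_apply] at hk
  set q₁ := (x k - Δ₁ k) / (n : ℤ)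
  set q₂ := (x k - Δ₂ k) / (n : ℤ)
  have hdvd : (n : ℤ) ∣ Δ₂ k - Δ₁ k := ⟨q₁ - q₂, by linarith [hk]⟩
  have habs : |Δ₂ k - Δ₁ k| < (n : ℤ) := by
    have := h1 k; have := h2 k
    rw [abs_lt]; omega
  have := Int.eq_zero_of_abs_lt_dvd hdvd habs
  omega
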